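/- Let uv be an edge of the Fibonacci cube Γ_n (n ≥ 2) where u and v differ in coordinate k, with u_k = 0 and v_k = 1. Then the number of vertices of Γ_n closer to u than to v equals f_{k+1} * f_{n-k+2}, and the number of vertices closer to v than to u equals f_k * f_{n-k+1}. -/

import Mathlib

open Finset

def noConsec (n : ℕ) (b : Fin n → Bool) : Prop :=
  ∀ i j : Fin n, (j : ℕ) = (i : ℕ) + 1 → ¬(b i = true ∧ b j = true)

instance (n : ℕ) : DecidablePred (noConsec n) := fun _ => by
  unfold noConsec; infer_instance

def lastF (m : ℕ) (b : Fin m → Bool) : Prop := ∀ j : Fin m, (j : ℕ) + 1 = m → b j = false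
def headF (m : ℕ) (b : Fin m → Bool) : Prop := ∀ j : Fin m, (j : ℕ) = 0 → b j = false

instance (m : ℕ) : DecidablePred (lastF m) := fun _ => by unfold lastF; infer_instance
instance (m : ℕ) : DecidablePred (headF m) := fun _ => by unfold headF; infer_instance

lemma noConsec_iff (n : ℕ) (b : Fin n → Bool) :
    noConsec n b ↔ ∀ k : ℕ, ∀ h : k + 1 < n,
      ¬(b ⟨k, Nat.lt_of_succ_lt h⟩ = true ∧ b ⟨k + 1, h⟩ = true) := by
  constructor
  · intro H k h
    exact H ⟨k, Nat.lt_of_succ_lt h⟩ ⟨k + 1, h⟩ rfl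
  · rintro H ⟨iv, hi⟩ ⟨jv, hj⟩ hij
    change jv = iv + 1 at hij
    subst hij
    exact H iv hj

def glue (n l : ℕ) (x : Bool) (p : Fin l → Bool) (s : Fin (n - l - 1) → Bool) : Fin n → Bool :=
  fun j => if h : (j : ℕ) < l then p ⟨j, h⟩
    else if h2 : (j : ℕ) = l then x
    else s ⟨(j : ℕ) - l - 1, by have := j.isLt; omega⟩

lemma glue_lt {n l : ℕ} {x p s} (k : ℕ) (hk : k < l) (hkn : k < n) :
    glue n l x p s ⟨k, hkn⟩ = p ⟨k, hk⟩ := by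
  unfold glue; rw [dif_pos hk]

lemma glue_at {n l : ℕ} {x p s} (hl : l < n) : glue n l x p s ⟨l, hl⟩ = x := by
  unfold glue; rw [dif_neg (by simp), dif_pos rfl]

lemma glue_gt {n l : ℕ} {x p s} (k : ℕ) (hk : l < k) (hkn : k < n) :
    glue n l x p s ⟨k, hkn⟩ = s ⟨k - l - 1, by omega⟩ := by
  unfold glue; rw [dif_neg (by simp; omega), dif_neg (by simp; omega)]

lemma glue_recon (n l : ℕ) (hl : l < n) (b : Fin n → Bool) :
    glue n l (b ⟨l, hl⟩) (fun j => b ⟨j, by have := j.isLt; omega⟩)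
      (fun j => b ⟨l + 1 + j, by have := j.isLt; omega⟩) = b := by
  funext j
  rcases j with ⟨k, hk⟩
  unfold glue
  dsimp only
  split_ifs with h1 h2
  · rfl
  · exact congrArg b (Fin.ext h2.symm)
  · exact congrArg b (Fin.ext (by simp only [Fin.val_mk]; omega))

lemma noConsec_glue (n l : ℕ) (hl : l < n) (x : Bool) (p : Fin l → Bool)
    (s : Fin (n - l - 1) → Bool) :
    noConsec n (glue n l x p s) ↔
      (noConsec l p ∧ (x = true → lastF l p)) ∧
      (noConsec (n - l - 1) s ∧ (x = true → headF (n - l - 1) s)) := by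
  rw [noConsec_iff]
  constructor
  · intro H
    refine ⟨⟨?_, ?_⟩, ?_, ?_⟩
    · rw [noConsec_iff]
      intro k h
      have := H k (by omega)
      rwa [glue_lt k (by omega), glue_lt (k+1) h] at this
    · intro hx j hj
      have h1 : (j : ℕ) + 1 < n := by omega
      have := H (j : ℕ) h1
      rw [glue_lt (j : ℕ) j.isLt,
        show (⟨(j : ℕ) + 1, h1⟩ : Fin n) = ⟨l, hl⟩ from Fin.ext hj, glue_at hl, hx] at this
      simp only [Fin.eta] at this
      by_contra hb
      exact this ⟨by simpa using hb, by trivial⟩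
    · rw [noConsec_iff]
      intro k h
      have h2 : l + 1 + k + 1 < n := by omega
      have := H (l + 1 + k) h2
      rw [glue_gt (l+1+k) (by omega), glue_gt (l+1+k+1) (by omega)] at this
      intro hc
      apply this
      constructor
      · convert hc.1 using 2
        exact Fin.ext (by simp only [Fin.val_mk]; omega)
      · convert hc.2 using 2
        exact Fin.ext (by simp only [Fin.val_mk]; omega)
    · intro hx j hj
      have h0 : (0:ℕ) + 1 < n - l - 1 + 1 := by have := j.isLt; omega
      have h2 : l + 1 < n := by have := j.isLt; omega
      have := H l h2
      rw [glue_at hl, glue_gt (l+1) (by omega) h2, hx] at this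
      have hs : s ⟨l + 1 - l - 1, by have := j.isLt; omega⟩ = false := by
        by_contra hb
        exact this ⟨by trivial, by simpa using hb⟩
      calc s j = s ⟨l + 1 - l - 1, by have := j.isLt; omega⟩ := by
                  exact congrArg s (Fin.ext (by simp only [Fin.val_mk]; omega))
        _ = false := hs
  · rintro ⟨⟨hp, hpl⟩, hs, hsh⟩
    intro k h
    rcases lt_trichotomy (k + 1) l with hc | hc | hc
    · rw [glue_lt k (by omega), glue_lt (k+1) hc]
      exact (noConsec_iff l p).1 hp k hc
    · rw [glue_lt k (by omega), show (⟨k+1, h⟩ : Fin n) = ⟨l, hl⟩ from Fin.ext hc, glue_at hl]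
      cases hx : x with
      | false => simp
      | true =>
        intro hcc
        have := hpl hx ⟨k, by omega⟩ (by simp only [Fin.val_mk]; omega)
        rw [this] at hcc
        exact absurd hcc.1 (by simp)
    · rcases Nat.lt_or_ge l k with hk | hk
      · rw [glue_gt k hk, glue_gt (k+1) (by omega)]
        intro hcc
        apply (noConsec_iff (n - l - 1) s).1 hs (k - l - 1) (by omega)
        constructor
        · convert hcc.1 using 2
        · convert hcc.2 using 2
          exact Fin.ext (by simp only [Fin.val_mk]; omega)
      · have hkl : k = l := by omega
        rw [show (⟨k, Nat.lt_of_succ_lt h⟩ : Fin n) = ⟨l, hl⟩ from Fin.ext hkl, glue_at hl]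
        rw [glue_gt (k+1) (by omega)]
        cases hx : x with
        | false => simp
        | true =>
          intro hcc
          have := hsh hx ⟨k + 1 - l - 1, by omega⟩ (by simp only [Fin.val_mk]; omega)
          rw [this] at hcc
          exact absurd hcc.2 (by simp)

lemma card_split (n l : ℕ) (hl : l < n) (x : Bool) :
    ((univ : Finset (Fin n → Bool)).filter (fun b => noConsec n b ∧ b ⟨l, hl⟩ = x)).card
    = ((univ : Finset (Fin l → Bool)).filter
        (fun p => noConsec l p ∧ (x = true → lastF l p))).card
      * ((univ : Finset (Fin (n - l - 1) → Bool)).filter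
        (fun s => noConsec (n - l - 1) s ∧ (x = true → headF (n - l - 1) s))).card := by
  rw [← card_product]
  refine card_bij'
    (fun b _ => ((fun j => b ⟨j, by have := j.isLt; omega⟩),
                 (fun j => b ⟨l + 1 + j, by have := j.isLt; omega⟩)))
    (fun ps _ => glue n l x ps.1 ps.2) ?_ ?_ ?_ ?_
  · intro b hb
    rw [mem_filter] at hb
    obtain ⟨-, hnc, hbl⟩ := hb
    have hre : glue n l x (fun j => b ⟨j, by have := j.isLt; omega⟩)
        (fun j => b ⟨l + 1 + j, by have := j.isLt; omega⟩) = b := by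
      rw [← hbl]; exact glue_recon n l hl b
    have := (noConsec_glue n l hl x _ _).1 (by rw [hre]; exact hnc)
    rw [mem_product, mem_filter, mem_filter]
    exact ⟨⟨mem_univ _, this.1⟩, ⟨mem_univ _, this.2⟩⟩
  · intro ps hps
    rw [mem_product, mem_filter, mem_filter] at hps
    rw [mem_filter]
    refine ⟨mem_univ _, ?_, glue_at hl⟩
    exact (noConsec_glue n l hl x ps.1 ps.2).2 ⟨hps.1.2, hps.2.2⟩
  · intro b hb
    rw [mem_filter] at hb
    have hg := glue_recon n l hl b
    rw [hb.2.2] at hg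
    exact hg
  · intro ps _
    refine Prod.ext ?_ ?_
    · funext j
      exact glue_lt (j : ℕ) j.isLt _
    · show (fun j : Fin (n - l - 1) => glue n l x ps.1 ps.2 ⟨l + 1 + j, _⟩) = ps.2
      funext j
      rw [glue_gt (l + 1 + (j : ℕ)) (by omega)]
      exact congrArg ps.2 (Fin.ext (by simp only [Fin.val_mk]; omega))

lemma card_one_of_zero {r : ℕ} (hr : r = 0) (P : (Fin r → Bool) → Prop) [DecidablePred P]
    (hP : ∀ s, P s) : ((univ : Finset (Fin r → Bool)).filter P).card = 1 := by
  rw [filter_true_of_mem (fun s _ => hP s), card_univ]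
  subst hr
  decide

lemma lastF_zero {r : ℕ} (hr : r = 0) (b : Fin r → Bool) : lastF r b :=
  fun j _ => absurd j.isLt (by omega)

lemma headF_zero {r : ℕ} (hr : r = 0) (b : Fin r → Bool) : headF r b :=
  fun j _ => absurd j.isLt (by omega)

lemma noConsec_zero {r : ℕ} (hr : r = 0) (b : Fin r → Bool) : noConsec r b :=
  fun j _ _ => absurd j.isLt (by omega)

lemma card_fib : ∀ m : ℕ,
    ((univ : Finset (Fin m → Bool)).filter (noConsec m)).card = Nat.fib (m + 2) ∧
    ((univ : Finset (Fin m → Bool)).filter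
      (fun b => noConsec m b ∧ lastF m b)).card = Nat.fib (m + 1) := by
  intro m
  induction m with
  | zero => exact ⟨by decide, by decide⟩
  | succ m ih =>
    have hl : m < m + 1 := Nat.lt_succ_self m
    have hr0 : m + 1 - m - 1 = 0 := by omega
    -- the x = false split
    have hfalse : ((univ : Finset (Fin (m+1) → Bool)).filter
        (fun b => noConsec (m+1) b ∧ b ⟨m, hl⟩ = false)).card = Nat.fib (m + 2) := by
      rw [card_split (m+1) m hl false]
      rw [card_one_of_zero hr0 _ (fun s => ⟨noConsec_zero hr0 s, fun hx => absurd hx (by simp)⟩)]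
      rw [mul_one]
      have e : ((univ : Finset (Fin m → Bool)).filter
          (fun p => noConsec m p ∧ (false = true → lastF m p)))
          = (univ : Finset (Fin m → Bool)).filter (noConsec m) :=
        filter_congr (fun p _ => by simp)
      rw [e]
      exact ih.1
    have htrue : ((univ : Finset (Fin (m+1) → Bool)).filter
        (fun b => noConsec (m+1) b ∧ b ⟨m, hl⟩ = true)).card = Nat.fib (m + 1) := by
      rw [card_split (m+1) m hl true]
      rw [card_one_of_zero hr0 _ (fun s => ⟨noConsec_zero hr0 s, fun _ => headF_zero hr0 s⟩)]
      rw [mul_one]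
      have e : ((univ : Finset (Fin m → Bool)).filter
          (fun p => noConsec m p ∧ (true = true → lastF m p)))
          = (univ : Finset (Fin m → Bool)).filter (fun p => noConsec m p ∧ lastF m p) :=
        filter_congr (fun p _ => by simp)
      rw [e]
      exact ih.2
    constructor
    · have hsum := card_filter_add_card_filter_not
        (s := (univ : Finset (Fin (m+1) → Bool)).filter (noConsec (m+1)))
        (p := fun b => b ⟨m, hl⟩ = false)
      rw [filter_filter, filter_filter] at hsum
      have hneg : ((univ : Finset (Fin (m+1) → Bool)).filter
          (fun b => noConsec (m+1) b ∧ ¬ b ⟨m, hl⟩ = false)).card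
          = ((univ : Finset (Fin (m+1) → Bool)).filter
          (fun b => noConsec (m+1) b ∧ b ⟨m, hl⟩ = true)).card := by
        congr 1
        apply filter_congr
        intro b _
        simp [Bool.not_eq_false]
      rw [hneg, hfalse, htrue] at hsum
      rw [← hsum]
      rw [show m + 1 + 2 = m + 3 from rfl,
        show Nat.fib (m + 3) = Nat.fib (m + 1) + Nat.fib (m + 2) from Nat.fib_add_two,
        Nat.add_comm]
    · have : ∀ b ∈ (univ : Finset (Fin (m+1) → Bool)),
          (noConsec (m+1) b ∧ lastF (m+1) b) ↔ (noConsec (m+1) b ∧ b ⟨m, hl⟩ = false) := by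
        intro b _
        constructor
        · rintro ⟨h1, h2⟩; exact ⟨h1, h2 ⟨m, hl⟩ rfl⟩
        · rintro ⟨h1, h2⟩
          refine ⟨h1, fun j hj => ?_⟩
          have hjm : j = ⟨m, hl⟩ := Fin.ext (by
            simp only [Fin.val_mk]
            exact Nat.succ_injective hj)
          rw [hjm]; exact h2
      rw [filter_congr this, hfalse]

lemma noConsec_rev {m : ℕ} {b : Fin m → Bool} (H : noConsec m b) :
    noConsec m (b ∘ Fin.rev) := by
  rw [noConsec_iff]
  intro k h
  simp only [Function.comp_apply]
  have h1 : (⟨k, Nat.lt_of_succ_lt h⟩ : Fin m).rev = ⟨m - (k + 1), by omega⟩ :=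
    Fin.ext (by simp [Fin.val_rev])
  have h2 : (⟨k + 1, h⟩ : Fin m).rev = ⟨m - (k + 2), by omega⟩ :=
    Fin.ext (by simp [Fin.val_rev])
  rw [h1, h2]
  have key := (noConsec_iff m b).1 H (m - (k + 2)) (by omega)
  intro hc
  apply key
  refine ⟨hc.2, ?_⟩
  have : (⟨m - (k + 2) + 1, by omega⟩ : Fin m) = ⟨m - (k + 1), by omega⟩ :=
    Fin.ext (by simp only [Fin.val_mk]; omega)
  rw [this]
  exact hc.1

lemma card_headF (m : ℕ) :
    ((univ : Finset (Fin m → Bool)).filter (fun b => noConsec m b ∧ headF m b)).card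
    = ((univ : Finset (Fin m → Bool)).filter (fun b => noConsec m b ∧ lastF m b)).card := by
  refine card_nbij' (fun b => b ∘ Fin.rev) (fun b => b ∘ Fin.rev) ?_ ?_ ?_ ?_
  · intro b hb
    rw [mem_coe, mem_filter] at hb ⊢
    obtain ⟨-, h1, h2⟩ := hb
    refine ⟨mem_univ _, noConsec_rev h1, fun j hj => ?_⟩
    simp only [Function.comp_apply]
    exact h2 j.rev (by simp [Fin.val_rev]; omega)
  · intro b hb
    rw [mem_coe, mem_filter] at hb ⊢
    obtain ⟨-, h1, h2⟩ := hb
    refine ⟨mem_univ _, noConsec_rev h1, fun j hj => ?_⟩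
    simp only [Function.comp_apply]
    exact h2 j.rev (by simp [Fin.val_rev]; omega)
  · intro b _
    funext j
    simp [Function.comp_apply, Fin.rev_rev]
  · intro b _
    funext j
    simp [Function.comp_apply, Fin.rev_rev]

lemma ham_step {n : ℕ} (a c w : Fin n → Bool) (i : Fin n)
    (hac : ∀ j, j ≠ i → a j = c j) (hne : a i ≠ c i) (hw : w i = a i) :
    hammingDist w c = hammingDist w a + 1 := by
  simp only [hammingDist]
  have hset : ({j | w j ≠ c j} : Finset (Fin n)) = insert i ({j | w j ≠ a j} : Finset (Fin n)) := by
    ext j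
    simp only [mem_insert, mem_filter, mem_univ, true_and]
    by_cases hj : j = i
    · subst hj
      constructor
      · intro _; exact Or.inl rfl
      · intro _; rw [hw]; exact hne
    · rw [hac j hj]
      simp [hj]
  rw [hset, card_insert_of_notMem]
  simp [hw]

def FibVertex (n : ℕ) := {b : Fin n → Bool // noConsec n b}

instance (n : ℕ) : Fintype (FibVertex n) := Subtype.fintype _

def closer (n : ℕ) (u v : FibVertex n) : ℕ :=
  ((univ : Finset (FibVertex n)).filter
    (fun w => hammingDist w.1 u.1 < hammingDist w.1 v.1)).card

lemma closer_eq (n : ℕ) (u v : FibVertex n) (i : Fin n)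
    (hne : u.1 i ≠ v.1 i) (hdiff : ∀ j : Fin n, j ≠ i → u.1 j = v.1 j) :
    closer n u v = ((univ : Finset (Fin n → Bool)).filter
      (fun b => noConsec n b ∧ b i = u.1 i)).card := by
  have key : ∀ b : Fin n → Bool, hammingDist b u.1 < hammingDist b v.1 ↔ b i = u.1 i := by
    intro b
    by_cases hbi : b i = u.1 i
    · have := ham_step u.1 v.1 b i hdiff hne hbi
      simp [this, hbi]
    · have hbv : b i = v.1 i := by
        revert hbi hne
        cases b i <;> cases u.1 i <;> cases v.1 i <;> simp
      have := ham_step v.1 u.1 b i (fun j hj => (hdiff j hj).symm) (Ne.symm hne) hbv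
      simp [this, hbi]
  unfold closer
  refine card_bij' (fun w _ => w.1) (fun b hb => ⟨b, (mem_filter.1 hb).2.1⟩) ?_ ?_ ?_ ?_
  · intro w hw
    rw [mem_filter] at hw ⊢
    exact ⟨mem_univ _, w.2, (key w.1).1 hw.2⟩
  · intro b hb
    rw [mem_filter] at hb
    apply mem_filter.2
    exact ⟨mem_univ _, (key b).2 hb.2.2⟩
  · intro w _
    rfl
  · intro b _
    rfl

/-- `u` and `v` differ exactly in coordinate `i` (so `uv` is an edge of Γ_n), with
`u_i = 0` and `v_i = 1`.  Here `i : Fin n` is the 0-based coordinate, so the 1-based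
coordinate `k` of the paper equals `i + 1`. -/
theorem closer_counts_fib_edge (n : ℕ) (hn : 2 ≤ n) (u v : FibVertex n) (i : Fin n)
    (hu : u.1 i = false) (hv : v.1 i = true)
    (hdiff : ∀ j : Fin n, j ≠ i → u.1 j = v.1 j) :
    closer n u v = Nat.fib ((i : ℕ) + 2) * Nat.fib (n - (i : ℕ) + 1) ∧
    closer n v u = Nat.fib ((i : ℕ) + 1) * Nat.fib (n - (i : ℕ)) := by
  have hne : u.1 i ≠ v.1 i := by rw [hu, hv]; simp
  have hil : (i : ℕ) < n := i.isLt
  constructor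
  · have h1 : closer n u v = ((univ : Finset (Fin n → Bool)).filter
        (fun b => noConsec n b ∧ b ⟨(i : ℕ), hil⟩ = false)).card := by
      rw [closer_eq n u v i hne hdiff, hu]
    rw [h1, card_split n (i : ℕ) hil false]
    have e1 : ((univ : Finset (Fin (i : ℕ) → Bool)).filter
        (fun p => noConsec (i : ℕ) p ∧ (false = true → lastF (i : ℕ) p)))
        = (univ : Finset (Fin (i : ℕ) → Bool)).filter (noConsec (i : ℕ)) :=
      filter_congr (fun p _ => by simp)
    have e2 : ((univ : Finset (Fin (n - (i : ℕ) - 1) → Bool)).filter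
        (fun s => noConsec (n - (i : ℕ) - 1) s ∧ (false = true → headF (n - (i : ℕ) - 1) s)))
        = (univ : Finset (Fin (n - (i : ℕ) - 1) → Bool)).filter (noConsec (n - (i : ℕ) - 1)) :=
      filter_congr (fun p _ => by simp)
    have harith : n - (i : ℕ) - 1 + 2 = n - (i : ℕ) + 1 := by clear e1 e2 h1; omega
    rw [e1, e2, (card_fib (i : ℕ)).1, (card_fib (n - (i : ℕ) - 1)).1, harith]
  · have h1 : closer n v u = ((univ : Finset (Fin n → Bool)).filter
        (fun b => noConsec n b ∧ b ⟨(i : ℕ), hil⟩ = true)).card := by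
      rw [closer_eq n v u i (Ne.symm hne) (fun j hj => (hdiff j hj).symm), hv]
    rw [h1, card_split n (i : ℕ) hil true]
    have e1 : ((univ : Finset (Fin (i : ℕ) → Bool)).filter
        (fun p => noConsec (i : ℕ) p ∧ (true = true → lastF (i : ℕ) p)))
        = (univ : Finset (Fin (i : ℕ) → Bool)).filter
          (fun p => noConsec (i : ℕ) p ∧ lastF (i : ℕ) p) :=
      filter_congr (fun p _ => by simp)
    have e2 : ((univ : Finset (Fin (n - (i : ℕ) - 1) → Bool)).filter
        (fun s => noConsec (n - (i : ℕ) - 1) s ∧ (true = true → headF (n - (i : ℕ) - 1) s)))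
        = (univ : Finset (Fin (n - (i : ℕ) - 1) → Bool)).filter
          (fun s => noConsec (n - (i : ℕ) - 1) s ∧ headF (n - (i : ℕ) - 1) s) :=
      filter_congr (fun p _ => by simp)
    have harith : n - (i : ℕ) - 1 + 1 = n - (i : ℕ) := by clear e1 e2 h1; omega
    rw [e1, e2, (card_fib (i : ℕ)).2, card_headF, (card_fib (n - (i : ℕ) - 1)).2, harith]
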